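/- arXiv:2105.01350 — 3 statements merged into one kernel-verified Lean document; each statement's English description precedes it below -/
import Mathlib

section
/- For every fixed γ ∈ (0, 1/2), lim_{ε → 1/2} J(ε,γ)/(ε - 1/2)⁴ = 128 γ²(1-γ)² / ln 2; that is, the conditional-mutual-information expression J(ε,γ) behaves like (128 γ²(1-γ)²/ln 2)·(ε - 1/2)⁴ to leading order as ε → 1/2. -/
open Filter

/-- The error function `erf z = (2/√π) ∫₀^z e^{-t²} dt`. -/
noncomputable def erf (z : ℝ) : ℝ := 2 / Real.sqrt Real.pi * ∫ t in (0:ℝ)..z, Real.exp (-t ^ 2)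

/-- The binary entropy function (base-2 logarithm). -/
noncomputable def Hb (p : ℝ) : ℝ := -(p * Real.logb 2 p) - (1 - p) * Real.logb 2 (1 - p)

/-- Crossover probability of the one-bit quantized legitimate channel. -/
noncomputable def eps (w Q : ℝ) : ℝ := 1 / 2 * (1 - erf (w / Real.sqrt (2 * Q)))

/-- Crossover probability of the one-bit quantized eavesdropper channel. -/
noncomputable def gam (w : ℝ) : ℝ := 1 / 2 * (1 - erf (w / Real.sqrt 2))

/-- Closed form of the conditional mutual information `I(X_q; Y_q | Z_q)`. -/
noncomputable def J (ε γ : ℝ) : ℝ :=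
  Hb (ε * γ + (1 - ε) * (1 - γ))
    - (ε * γ + (1 - ε) * (1 - γ)) *
        Hb ((ε ^ 2 * γ + (1 - ε) ^ 2 * (1 - γ)) / (ε * γ + (1 - ε) * (1 - γ)))
    - (ε * (1 - γ) + (1 - ε) * γ) *
        Hb (ε * (1 - ε) / (ε * (1 - γ) + (1 - ε) * γ))

open Asymptotics

noncomputable def gfun (u : ℝ) : ℝ := (1 + u) * Real.log (1 + u)
noncomputable def Pfun (u : ℝ) : ℝ := u + u ^ 2 / 2 - u ^ 3 / 6 + u ^ 4 / 12

lemma gasym : (fun u : ℝ => gfun u - Pfun u) =o[nhds 0] (fun u : ℝ => u ^ 4) := by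
  have h5 : (fun u : ℝ => gfun u - Pfun u) =O[nhds 0] (fun u : ℝ => u ^ 5) := by
    rw [isBigO_iff]
    refine ⟨4, ?_⟩
    have hev : ∀ᶠ u : ℝ in nhds 0, |u| < 1 / 2 := by
      have : ∀ᶠ u : ℝ in nhds 0, |u - 0| < 1 / 2 :=
        eventually_abs_sub_lt 0 (by norm_num)
      simpa using this
    filter_upwards [hev] with u hu
    have hu1 : |(-u : ℝ)| < 1 := by rw [abs_neg]; linarith [abs_nonneg u]
    have key := Real.abs_log_sub_add_sum_range_le hu1 4
    have hsum : (∑ i ∈ Finset.range 4, (-u) ^ (i + 1) / (i + 1)) =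
        -u + u ^ 2 / 2 - u ^ 3 / 3 + u ^ 4 / 4 := by
      simp [Finset.sum_range_succ]
      ring
    rw [hsum] at key
    have h1u : (1 : ℝ) - -u = 1 + u := by ring
    rw [h1u, abs_neg] at key
    set r := Real.log (1 + u) - (u - u ^ 2 / 2 + u ^ 3 / 3 - u ^ 4 / 4) with hr
    have hrb : |r| ≤ |u| ^ 5 / (1 - |u|) := by
      have : -u + u ^ 2 / 2 - u ^ 3 / 3 + u ^ 4 / 4 + Real.log (1 + u) = r := by
        rw [hr]; ring
      rwa [this] at key
    have hrb2 : |r| ≤ 2 * |u| ^ 5 := by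
      have h1 : (1 : ℝ) / 2 ≤ 1 - |u| := by linarith
      have h2 : |u| ^ 5 / (1 - |u|) ≤ |u| ^ 5 / (1 / 2) := by
        apply div_le_div_of_nonneg_left (by positivity) (by norm_num) h1
      calc |r| ≤ |u| ^ 5 / (1 - |u|) := hrb
        _ ≤ |u| ^ 5 / (1 / 2) := h2
        _ = 2 * |u| ^ 5 := by ring
    have hkey : gfun u - Pfun u = -(u ^ 5) / 4 + (1 + u) * r := by
      have hlog : Real.log (1 + u) = (u - u ^ 2 / 2 + u ^ 3 / 3 - u ^ 4 / 4) + r := by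
        rw [hr]; ring
      simp only [gfun, Pfun]
      rw [hlog]; ring
    have h1u2 : |1 + u| ≤ 3 / 2 := by
      cases abs_cases u with
      | inl h => rw [abs_le]; constructor <;> nlinarith [h.1, h.2]
      | inr h => rw [abs_le]; constructor <;> nlinarith [h.1, h.2]
    calc ‖gfun u - Pfun u‖ = |(-(u ^ 5) / 4 + (1 + u) * r)| := by rw [hkey]; rfl
      _ ≤ |(-(u ^ 5) / 4)| + |(1 + u) * r| := abs_add_le _ _
      _ = |u| ^ 5 / 4 + |1 + u| * |r| := by
          rw [abs_mul, abs_div, abs_neg, abs_pow]; norm_num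
      _ ≤ |u| ^ 5 / 4 + (3 / 2) * (2 * |u| ^ 5) := by
          gcongr
      _ ≤ 4 * |u| ^ 5 := by nlinarith [pow_nonneg (abs_nonneg u) 5]
      _ = 4 * ‖u ^ 5‖ := by rw [Real.norm_eq_abs, abs_pow]
  exact h5.trans_isLittleO (isLittleO_pow_pow (by norm_num))

noncomputable def Ffun (d x : ℝ) : ℝ :=
  -((1 - 2 * x * d) * Real.log (1 - 2 * x * d))
    - (1 + 2 * x * d) * Real.log (1 + 2 * x * d)
    + (1 + 4 * x ^ 2 - 4 * x * d) / 4 * Real.log (1 + 4 * x ^ 2 - 4 * x * d)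
    + (1 + 4 * x ^ 2 + 4 * x * d) / 4 * Real.log (1 + 4 * x ^ 2 + 4 * x * d)
    + (1 - 4 * x ^ 2) / 2 * Real.log (1 - 4 * x ^ 2)

-- helper: for continuous v, g(x v x) - P(x v x) = o(x^4)
lemma helper (v : ℝ → ℝ) (hv : Continuous v) :
    (fun x : ℝ => gfun (x * v x) - Pfun (x * v x)) =o[nhds 0] (fun x : ℝ => x ^ 4) := by
  have h0 : Tendsto (fun x : ℝ => x * v x) (nhds 0) (nhds 0) := by
    have : Tendsto (fun x : ℝ => x * v x) (nhds 0) (nhds (0 * v 0)) := (continuous_id.mul hv).tendsto 0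
    simpa using this
  have h1 := gasym.comp_tendsto h0
  refine h1.trans_isBigO ?_
  have he : (fun x : ℝ => ((fun u : ℝ => u ^ 4) ∘ fun x => x * v x) x)
      = fun x : ℝ => x ^ 4 * (v x) ^ 4 := by
    funext x; simp [Function.comp]; ring
  calc (fun u : ℝ => u ^ 4) ∘ (fun x : ℝ => x * v x)
      = fun x : ℝ => x ^ 4 * (v x) ^ 4 := he
    _ =O[nhds 0] fun x : ℝ => x ^ 4 * 1 :=
        (isBigO_refl (fun x : ℝ => x ^ 4) _).mul (((hv.pow 4).tendsto 0).isBigO_one ℝ)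
    _ =O[nhds 0] fun x : ℝ => x ^ 4 := by
        simpa using isBigO_refl (fun x : ℝ => x ^ 4) (nhds 0)

lemma Fasym (d : ℝ) :
    Tendsto (fun x : ℝ => Ffun d x / x ^ 4) (nhdsWithin 0 {(0:ℝ)}ᶜ)
      (nhds (8 * (1 - d ^ 2) ^ 2)) := by
  have hdecomp : ∀ x : ℝ, Ffun d x - 8 * (1 - d ^ 2) ^ 2 * x ^ 4 =
      -(gfun (x * (-(2 * d))) - Pfun (x * (-(2 * d))))
        - (gfun (x * (2 * d)) - Pfun (x * (2 * d)))
        + (1 / 4) * (gfun (x * (4 * x - 4 * d)) - Pfun (x * (4 * x - 4 * d)))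
        + (1 / 4) * (gfun (x * (4 * x + 4 * d)) - Pfun (x * (4 * x + 4 * d)))
        + (1 / 2) * (gfun (x * (-(4 * x))) - Pfun (x * (-(4 * x))))
        + (64 * d ^ 2 * x ^ 6 + 64 / 3 * x ^ 8) := by
    intro x
    simp only [Ffun, gfun, Pfun]
    rw [show (1 : ℝ) + x * (-(2 * d)) = 1 - 2 * x * d by ring,
        show (1 : ℝ) + x * (2 * d) = 1 + 2 * x * d by ring,
        show (1 : ℝ) + x * (4 * x - 4 * d) = 1 + 4 * x ^ 2 - 4 * x * d by ring,
        show (1 : ℝ) + x * (4 * x + 4 * d) = 1 + 4 * x ^ 2 + 4 * x * d by ring,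
        show (1 : ℝ) + x * (-(4 * x)) = 1 - 4 * x ^ 2 by ring]
    ring
  have hlo : (fun x : ℝ => Ffun d x - 8 * (1 - d ^ 2) ^ 2 * x ^ 4)
      =o[nhds 0] (fun x : ℝ => x ^ 4) := by
    have h1 := helper (fun _ => -(2 * d)) continuous_const
    have h2 := helper (fun _ => 2 * d) continuous_const
    have h3 := helper (fun x => 4 * x - 4 * d)
      ((continuous_const.mul continuous_id).sub continuous_const)
    have h4 := helper (fun x => 4 * x + 4 * d)
      ((continuous_const.mul continuous_id).add continuous_const)
    have h5 := helper (fun x => -(4 * x)) (continuous_const.mul continuous_id).neg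
    have h6 : (fun x : ℝ => 64 * d ^ 2 * x ^ 6 + 64 / 3 * x ^ 8)
        =o[nhds 0] (fun x : ℝ => x ^ 4) := by
      have p6 : (fun x : ℝ => x ^ 6) =o[nhds 0] (fun x : ℝ => x ^ 4) :=
        isLittleO_pow_pow (by norm_num)
      have p8 : (fun x : ℝ => x ^ 8) =o[nhds 0] (fun x : ℝ => x ^ 4) :=
        isLittleO_pow_pow (by norm_num)
      exact (p6.const_mul_left _).add (p8.const_mul_left _)
    have := ((((h1.neg_left.sub h2).add (h3.const_mul_left (1/4))).add
      (h4.const_mul_left (1/4))).add (h5.const_mul_left (1/2))).add h6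
    refine this.congr' ?_ (by rfl)
    filter_upwards with x
    rw [hdecomp x]
  have h2 : Tendsto (fun x : ℝ => (Ffun d x - 8 * (1 - d ^ 2) ^ 2 * x ^ 4) / x ^ 4)
      (nhdsWithin 0 {(0:ℝ)}ᶜ) (nhds 0) :=
    hlo.tendsto_div_nhds_zero.mono_left nhdsWithin_le_nhds
  have h3 : Tendsto (fun x : ℝ => (Ffun d x - 8 * (1 - d ^ 2) ^ 2 * x ^ 4) / x ^ 4
      + 8 * (1 - d ^ 2) ^ 2) (nhdsWithin 0 {(0:ℝ)}ᶜ) (nhds (0 + 8 * (1 - d ^ 2) ^ 2)) :=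
    h2.add_const _
  rw [zero_add] at h3
  refine h3.congr' ?_
  filter_upwards [self_mem_nhdsWithin] with x hx
  have hx4 : x ^ 4 ≠ 0 := pow_ne_zero _ (by simpa using hx)
  rw [sub_div, mul_div_assoc, div_self hx4]; ring

set_option maxHeartbeats 1000000 in
lemma Jeq (d x : ℝ) (hd0 : 0 < d) (hd1 : d < 1) (hx : |x| < 1 / 2) :
    J (1 / 2 + x) ((1 - d) / 2) = Ffun d x / Real.log 2 := by
  obtain ⟨hx1, hx2⟩ := abs_lt.mp hx
  have pos1 : 0 < 1 - 2 * x * d := by nlinarith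
  have pos2 : 0 < 1 + 2 * x * d := by nlinarith
  have pos3 : 0 < 1 - 4 * x ^ 2 := by nlinarith
  have pos4 : 0 < 1 + 4 * x ^ 2 - 4 * x * d := by nlinarith [sq_nonneg (2 * x - d)]
  have pos5 : 0 < 1 + 4 * x ^ 2 + 4 * x * d := by nlinarith [sq_nonneg (2 * x + d)]
  have hl2 : Real.log 2 ≠ 0 := ne_of_gt (Real.log_pos (by norm_num))
  have two_ne : (2 : ℝ) ≠ 0 := by norm_num
  have n1 : (1 : ℝ) - 2 * x * d ≠ 0 := ne_of_gt pos1
  have n2 : (1 : ℝ) + 2 * x * d ≠ 0 := ne_of_gt pos2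
  simp only [J]
  rw [show (1 / 2 + x) * ((1 - d) / 2) + (1 - (1 / 2 + x)) * (1 - (1 - d) / 2)
        = (1 - 2 * x * d) / 2 by ring,
      show (1 / 2 + x) ^ 2 * ((1 - d) / 2) + (1 - (1 / 2 + x)) ^ 2 * (1 - (1 - d) / 2)
        = (1 + 4 * x ^ 2 - 4 * x * d) / 4 by ring,
      show (1 / 2 + x) * (1 - (1 - d) / 2) + (1 - (1 / 2 + x)) * ((1 - d) / 2)
        = (1 + 2 * x * d) / 2 by ring,
      show (1 / 2 + x) * (1 - (1 / 2 + x)) = (1 - 4 * x ^ 2) / 4 by ring,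
      show (1 + 4 * x ^ 2 - 4 * x * d) / 4 / ((1 - 2 * x * d) / 2)
          = (1 + 4 * x ^ 2 - 4 * x * d) / (2 - 4 * x * d) by
        rw [show (2 : ℝ) - 4 * x * d = 2 * (1 - 2 * x * d) by ring]; field_simp; ring,
      show (1 - 4 * x ^ 2) / 4 / ((1 + 2 * x * d) / 2)
          = (1 - 4 * x ^ 2) / (2 + 4 * x * d) by
        rw [show (2 : ℝ) + 4 * x * d = 2 * (1 + 2 * x * d) by ring]; field_simp; ring]
  simp only [Hb, Real.logb]
  rw [show (1 : ℝ) - (1 - 2 * x * d) / 2 = (1 + 2 * x * d) / 2 by ring,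
      show (1 : ℝ) - (1 + 4 * x ^ 2 - 4 * x * d) / (2 - 4 * x * d)
          = (1 - 4 * x ^ 2) / (2 - 4 * x * d) by
        rw [one_sub_div (by nlinarith : (2:ℝ) - 4 * x * d ≠ 0)]; congr 1; ring,
      show (1 : ℝ) - (1 - 4 * x ^ 2) / (2 + 4 * x * d)
          = (1 + 4 * x ^ 2 + 4 * x * d) / (2 + 4 * x * d) by
        rw [one_sub_div (by nlinarith : (2:ℝ) + 4 * x * d ≠ 0)]; congr 1; ring]
  have c1 : (1 - 2 * x * d) / 2 * ((1 + 4 * x ^ 2 - 4 * x * d) / (2 - 4 * x * d))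
      = (1 + 4 * x ^ 2 - 4 * x * d) / 4 := by
    rw [show (2 : ℝ) - 4 * x * d = 2 * (1 - 2 * x * d) by ring]; field_simp; ring
  have c2 : (1 - 2 * x * d) / 2 * ((1 - 4 * x ^ 2) / (2 - 4 * x * d))
      = (1 - 4 * x ^ 2) / 4 := by
    rw [show (2 : ℝ) - 4 * x * d = 2 * (1 - 2 * x * d) by ring]; field_simp; ring
  have c3 : (1 + 2 * x * d) / 2 * ((1 - 4 * x ^ 2) / (2 + 4 * x * d))
      = (1 - 4 * x ^ 2) / 4 := by
    rw [show (2 : ℝ) + 4 * x * d = 2 * (1 + 2 * x * d) by ring]; field_simp; ring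
  have c4 : (1 + 2 * x * d) / 2 * ((1 + 4 * x ^ 2 + 4 * x * d) / (2 + 4 * x * d))
      = (1 + 4 * x ^ 2 + 4 * x * d) / 4 := by
    rw [show (2 : ℝ) + 4 * x * d = 2 * (1 + 2 * x * d) by ring]; field_simp; ring
  simp only [mul_sub, mul_neg, ← mul_assoc]
  rw [c1, c2, c3, c4]
  have lgm : Real.log (2 - 4 * x * d) = Real.log 2 + Real.log (1 - 2 * x * d) := by
    rw [show (2 : ℝ) - 4 * x * d = 2 * (1 - 2 * x * d) by ring, Real.log_mul two_ne n1]
  have lgp : Real.log (2 + 4 * x * d) = Real.log 2 + Real.log (1 + 2 * x * d) := by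
    rw [show (2 : ℝ) + 4 * x * d = 2 * (1 + 2 * x * d) by ring, Real.log_mul two_ne n2]
  rw [Real.log_div n1 two_ne,
      Real.log_div n2 two_ne,
      Real.log_div (ne_of_gt pos4) (by nlinarith : (2:ℝ) - 4 * x * d ≠ 0),
      Real.log_div (ne_of_gt pos3) (by nlinarith : (2:ℝ) - 4 * x * d ≠ 0),
      Real.log_div (ne_of_gt pos3) (by nlinarith : (2:ℝ) + 4 * x * d ≠ 0),
      Real.log_div (ne_of_gt pos5) (by nlinarith : (2:ℝ) + 4 * x * d ≠ 0),
      lgm, lgp]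
  simp only [Ffun]
  field_simp
  ring


/-- For fixed `γ ∈ (0,1/2)`,
`lim_{ε → 1/2} J(ε,γ)/(ε-1/2)⁴ = 128 γ²(1-γ)²/ln 2`. -/
theorem J_leading_order (γ : ℝ) (hγ : γ ∈ Set.Ioo (0 : ℝ) (1 / 2)) :
    Tendsto (fun ε : ℝ => J ε γ / (ε - 1 / 2) ^ 4) (nhdsWithin (1 / 2) {(1 / 2)}ᶜ)
      (nhds (128 * γ ^ 2 * (1 - γ) ^ 2 / Real.log 2)) := by
  obtain ⟨hγ0, hγ2⟩ := hγ
  have hd0 : 0 < 1 - 2 * γ := by linarith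
  have hd1 : 1 - 2 * γ < 1 := by linarith
  have hmap : Tendsto (fun ε : ℝ => ε - 1 / 2) (nhdsWithin (1 / 2) {(1 / 2 : ℝ)}ᶜ)
      (nhdsWithin 0 {(0 : ℝ)}ᶜ) := by
    apply tendsto_nhdsWithin_of_tendsto_nhds_of_eventually_within
    · have h : Tendsto (fun ε : ℝ => ε - 1 / 2) (nhds (1 / 2)) (nhds 0) := by
        have h0 : Tendsto (fun ε : ℝ => ε - 1 / 2) (nhds (1 / 2)) (nhds (1 / 2 - 1 / 2)) :=
          ((continuous_id.sub continuous_const).tendsto (1 / 2 : ℝ))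
        simpa using h0
      exact h.mono_left nhdsWithin_le_nhds
    · filter_upwards [self_mem_nhdsWithin] with ε hε
      simp only [Set.mem_compl_iff, Set.mem_singleton_iff] at hε ⊢
      intro h; apply hε; linarith
  have hF := (Fasym (1 - 2 * γ)).comp hmap
  have hFd := hF.div_const (Real.log 2)
  have heq : 8 * (1 - (1 - 2 * γ) ^ 2) ^ 2 / Real.log 2
      = 128 * γ ^ 2 * (1 - γ) ^ 2 / Real.log 2 := by
    congr 1; ring
  rw [heq] at hFd
  refine Filter.Tendsto.congr' ?_ hFd
  have hev : ∀ᶠ ε in nhdsWithin (1 / 2 : ℝ) {(1 / 2 : ℝ)}ᶜ, |ε - 1 / 2| < 1 / 2 :=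
    (eventually_abs_sub_lt (1 / 2 : ℝ) (by norm_num)).filter_mono nhdsWithin_le_nhds
  filter_upwards [hev] with ε hε
  have hJ := Jeq (1 - 2 * γ) (ε - 1 / 2) hd0 hd1 hε
  rw [show (1 : ℝ) / 2 + (ε - 1 / 2) = ε by ring,
      show (1 - (1 - 2 * γ)) / 2 = γ by ring] at hJ
  simp only [Function.comp]
  rw [hJ]
  ring
end

section
/- For every w > 0, lim_{Q → ∞} Q² · J(ε(w,Q), γ(w)) = 2 w⁴ (1 - erf(w/√2)²)² / (π² ln 2). -/
open Filter

open Real Set MeasureTheory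


noncomputable def Tpoly (u : ℝ) : ℝ := u + u^2/2 - u^3/6 + u^4/12

noncomputable def psi (u : ℝ) : ℝ := (1+u) * Real.log (1+u) - Tpoly u

lemma psi_bound {u : ℝ} (hu : |u| ≤ 1/2) : |psi u| ≤ 4 * |u|^5 := by
  have h1 : |u| < 1 := lt_of_le_of_lt hu (by norm_num)
  have key := Real.abs_log_sub_add_sum_range_le (x := -u) (by rwa [abs_neg]) 4
  have hsum : (∑ i ∈ Finset.range 4, (-u)^(i+1)/((i:ℝ)+1)) = -(u - u^2/2 + u^3/3 - u^4/4) := by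
    simp [Finset.sum_range_succ]
    ring
  rw [hsum, show (1:ℝ) - -u = 1 + u from by ring,
    show -(u - u^2/2 + u^3/3 - u^4/4) + Real.log (1+u)
        = Real.log (1+u) - (u - u^2/2 + u^3/3 - u^4/4) from by ring, abs_neg] at key
  have hkey : |Real.log (1+u) - (u - u^2/2 + u^3/3 - u^4/4)| ≤ |u|^5/(1-|u|) := by
    simpa using key
  have hE2 : |Real.log (1+u) - (u - u^2/2 + u^3/3 - u^4/4)| ≤ 2 * |u|^5 := by
    have h2 : |u|^5/(1-|u|) ≤ |u|^5/(1/2) :=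
      div_le_div_of_nonneg_left (by positivity) (by norm_num) (by linarith)
    calc |Real.log (1+u) - (u - u^2/2 + u^3/3 - u^4/4)| ≤ |u|^5/(1-|u|) := hkey
      _ ≤ |u|^5/(1/2) := h2
      _ = 2 * |u|^5 := by ring
  have hpsi : psi u = (1+u) * (Real.log (1+u) - (u - u^2/2 + u^3/3 - u^4/4)) - u^5/4 := by
    unfold psi Tpoly; ring
  have h13 : |1+u| ≤ 3/2 := by
    calc |1+u| ≤ |(1:ℝ)| + |u| := abs_add_le _ _
      _ ≤ 3/2 := by rw [abs_one]; linarith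
  calc |psi u| = |(1+u) * (Real.log (1+u) - (u - u^2/2 + u^3/3 - u^4/4)) - u^5/4| := by
        rw [hpsi]
    _ ≤ |(1+u) * (Real.log (1+u) - (u - u^2/2 + u^3/3 - u^4/4))| + |u^5/4| := abs_sub _ _
    _ = |1+u| * |Real.log (1+u) - (u - u^2/2 + u^3/3 - u^4/4)| + |u|^5/4 := by
        rw [abs_mul, abs_div, abs_pow]; norm_num
    _ ≤ (3/2) * (2*|u|^5) + |u|^5/4 :=
        add_le_add (mul_le_mul h13 hE2 (abs_nonneg _) (by norm_num)) le_rfl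
    _ ≤ 4 * |u|^5 := by nlinarith [pow_nonneg (abs_nonneg u) 5]

noncomputable def fg (g d : ℝ) : ℝ :=
  -((1+2*d*g) * Real.log (1+2*d*g)) - (1-2*d*g) * Real.log (1-2*d*g)
  + (1+4*d*g+4*d^2) * Real.log (1+4*d*g+4*d^2) / 4
  + (1-4*d*g+4*d^2) * Real.log (1-4*d*g+4*d^2) / 4
  + (1-4*d^2) * Real.log (1-4*d^2) / 2

lemma fg_decomp (g d : ℝ) :
    fg g d = d^4 * (8*(1-g^2)^2 + 64*g^2*d^2 + 64/3*d^4)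
      + (-psi (2*d*g) - psi (-(2*d*g)) + psi (4*d*g+4*d^2)/4
          + psi (-(4*d*g)+4*d^2)/4 + psi (-(4*d^2))/2) := by
  unfold fg psi Tpoly
  ring_nf

lemma tendsto_fg (g : ℝ) :
    Tendsto (fun d : ℝ => fg g d / d^4) (nhdsWithin 0 {(0:ℝ)}ᶜ)
      (nhds (8*(1-g^2)^2)) := by
  set K : ℝ := 4*(|g|+1) with hK
  have hK0 : 0 < K := by positivity
  set m : ℝ := min 1 (1/(2*K)) with hm
  have hm0 : 0 < m := by
    apply lt_min one_pos; positivity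
  have hbound : ∀ d : ℝ, d ≠ 0 → |d| ≤ m →
      |fg g d / d^4 - (8*(1-g^2)^2 + 64*g^2*d^2 + 64/3*d^4)| ≤ 12*K^5*|d| := by
    intro d hd0 hdm
    have hd1 : |d| ≤ 1 := le_trans hdm (min_le_left _ _)
    have hd2 : K * |d| ≤ 1/2 := by
      have h' : |d| ≤ 1/(2*K) := le_trans hdm (min_le_right _ _)
      calc K * |d| ≤ K * (1/(2*K)) := by
            apply mul_le_mul_of_nonneg_left h' hK0.le
        _ = 1/2 := by field_simp
    have habs : ∀ u : ℝ, |u| ≤ K * |d| → |psi u| ≤ 4 * (K*|d|)^5 := by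
      intro u hu
      calc |psi u| ≤ 4 * |u|^5 := psi_bound (le_trans hu hd2)
        _ ≤ 4 * (K*|d|)^5 := by
            have : |u|^5 ≤ (K*|d|)^5 := pow_le_pow_left₀ (abs_nonneg u) hu 5
            linarith
    have hg1 : |g| + 1 ≥ 1 := by have := abs_nonneg g; linarith
    have b1 : |2*d*g| ≤ K * |d| := by
      rw [abs_mul, abs_mul]
      simp only [abs_two]
      nlinarith [abs_nonneg d, abs_nonneg g]
    have b2 : |(-(2*d*g))| ≤ K * |d| := by rw [abs_neg]; exact b1
    have b3 : |4*d*g+4*d^2| ≤ K * |d| := by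
      calc |4*d*g+4*d^2| ≤ |4*d*g| + |4*d^2| := abs_add_le _ _
        _ = 4*(|d| * |g|) + 4 * |d|^2 := by
            rw [abs_mul, abs_mul, abs_mul, abs_pow]; simp [abs_of_nonneg]; ring
        _ ≤ K * |d| := by nlinarith [abs_nonneg d, abs_nonneg g]
    have b4 : |(-(4*d*g))+4*d^2| ≤ K * |d| := by
      calc |(-(4*d*g))+4*d^2| ≤ |(-(4*d*g))| + |4*d^2| := abs_add_le _ _
        _ = 4*(|d| * |g|) + 4 * |d|^2 := by
            rw [abs_neg, abs_mul, abs_mul, abs_mul, abs_pow]; simp [abs_of_nonneg]; ring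
        _ ≤ K * |d| := by nlinarith [abs_nonneg d, abs_nonneg g]
    have b5 : |(-(4*d^2))| ≤ K * |d| := by
      rw [abs_neg, abs_mul, abs_pow]
      simp only [abs_of_nonneg (by norm_num : (0:ℝ) ≤ 4)]
      nlinarith [abs_nonneg d, abs_nonneg g]
    set R : ℝ := -psi (2*d*g) - psi (-(2*d*g)) + psi (4*d*g+4*d^2)/4
          + psi (-(4*d*g)+4*d^2)/4 + psi (-(4*d^2))/2 with hR
    have hRb : |R| ≤ 12 * (K*|d|)^5 := by
      have p1 := habs _ b1
      have p2 := habs _ b2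
      have p3 := habs _ b3
      have p4 := habs _ b4
      have p5 := habs _ b5
      have t1 : |R| ≤ |psi (2*d*g)| + |psi (-(2*d*g))| + |psi (4*d*g+4*d^2)|/4
          + |psi (-(4*d*g)+4*d^2)|/4 + |psi (-(4*d^2))|/2 := by
        rw [hR]
        calc |(-psi (2*d*g) - psi (-(2*d*g)) + psi (4*d*g+4*d^2)/4
              + psi (-(4*d*g)+4*d^2)/4) + psi (-(4*d^2))/2|
            ≤ |(-psi (2*d*g) - psi (-(2*d*g)) + psi (4*d*g+4*d^2)/4
              + psi (-(4*d*g)+4*d^2)/4)| + |psi (-(4*d^2))/2| := abs_add_le _ _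
          _ ≤ (|(-psi (2*d*g) - psi (-(2*d*g)) + psi (4*d*g+4*d^2)/4)|
              + |psi (-(4*d*g)+4*d^2)/4|) + |psi (-(4*d^2))/2| := by
                gcongr
                exact abs_add_le _ _
          _ ≤ ((|(-psi (2*d*g) - psi (-(2*d*g)))| + |psi (4*d*g+4*d^2)/4|)
              + |psi (-(4*d*g)+4*d^2)/4|) + |psi (-(4*d^2))/2| := by
                gcongr
                exact abs_add_le _ _
          _ ≤ (((|(-psi (2*d*g))| + |psi (-(2*d*g))|) + |psi (4*d*g+4*d^2)/4|)
              + |psi (-(4*d*g)+4*d^2)/4|) + |psi (-(4*d^2))/2| := by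
                gcongr
                exact abs_sub _ _
          _ = |psi (2*d*g)| + |psi (-(2*d*g))| + |psi (4*d*g+4*d^2)|/4
              + |psi (-(4*d*g)+4*d^2)|/4 + |psi (-(4*d^2))|/2 := by
                rw [abs_neg, abs_div, abs_div, abs_div]; norm_num
      linarith
    have hfgd : fg g d / d^4 - (8*(1-g^2)^2 + 64*g^2*d^2 + 64/3*d^4) = R / d^4 := by
      rw [fg_decomp g d, hR]
      field_simp
      ring
    rw [hfgd, abs_div]
    have hd4 : |d^4| = |d|^4 := by rw [abs_pow]
    rw [hd4]
    have hd4p : (0:ℝ) < |d|^4 := by positivity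
    rw [div_le_iff₀ hd4p]
    calc |R| ≤ 12 * (K*|d|)^5 := hRb
      _ = 12*K^5*|d| * |d|^4 := by ring
  have hsplit : ∀ d : ℝ, fg g d / d^4
      = (fg g d / d^4 - (8*(1-g^2)^2 + 64*g^2*d^2 + 64/3*d^4))
        + (8*(1-g^2)^2 + 64*g^2*d^2 + 64/3*d^4) := by intro d; ring
  rw [show (8*(1-g^2)^2 : ℝ) = 0 + (8*(1-g^2)^2 + 64*g^2*(0:ℝ)^2 + 64/3*(0:ℝ)^4) from by ring]
  apply Tendsto.congr (fun d => (hsplit d).symm)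
  apply Tendsto.add
  · apply squeeze_zero_norm' (a := fun d : ℝ => 12*K^5*|d|)
    · have h1 : ∀ᶠ d in nhdsWithin (0:ℝ) {(0:ℝ)}ᶜ, |d| ≤ m := by
        apply eventually_nhdsWithin_of_eventually_nhds
        filter_upwards [Metric.ball_mem_nhds (0:ℝ) hm0] with d hd
        rw [Metric.mem_ball, Real.dist_eq, sub_zero] at hd
        exact hd.le
      have h2 : ∀ᶠ d in nhdsWithin (0:ℝ) {(0:ℝ)}ᶜ, d ≠ 0 := by
        filter_upwards [self_mem_nhdsWithin] with d hd
        exact Set.mem_compl_singleton_iff.mp hd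
      filter_upwards [h1, h2] with d hd hd0
      simpa [Real.norm_eq_abs] using hbound d hd0 hd
    · have h3 : Tendsto (fun d : ℝ => 12*K^5*|d|) (nhds 0) (nhds (12*K^5*|(0:ℝ)|)) :=
        (continuous_const.mul continuous_abs).tendsto 0
      simpa using h3.mono_left nhdsWithin_le_nhds
  · have hc : Continuous (fun d : ℝ => 8*(1-g^2)^2 + 64*g^2*d^2 + 64/3*d^4) := by fun_prop
    have := (hc.tendsto 0).mono_left
      (nhdsWithin_le_nhds (s := {(0:ℝ)}ᶜ))
    simpa using this

lemma Hb_split {x y : ℝ} (hx : 0 < x) (hy : 0 < y) (hxy : x + y = 1) :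
    Hb x = (-(x * Real.log x) - y * Real.log y) / Real.log 2 := by
  have hlog2 : Real.log 2 ≠ 0 := (Real.log_pos (by norm_num)).ne'
  unfold Hb Real.logb
  rw [show (1:ℝ) - x = y from by linarith]
  field_simp

lemma Hb_mul {x y : ℝ} (hx : 0 < x) (hy : 0 < y) :
    (x+y) * Hb (x/(x+y))
      = (-(x * Real.log x) - y * Real.log y + (x+y) * Real.log (x+y)) / Real.log 2 := by
  have hlog2 : Real.log 2 ≠ 0 := (Real.log_pos (by norm_num)).ne'
  have hxy : 0 < x + y := by linarith
  unfold Hb Real.logb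
  rw [show 1 - x/(x+y) = y/(x+y) from by field_simp; ring,
    Real.log_div hx.ne' hxy.ne', Real.log_div hy.ne' hxy.ne']
  field_simp
  ring

lemma J_eq (g δ : ℝ) (hg0 : 0 < g) (hg1 : g < 1) (hδ0 : 0 < δ) (hδ1 : δ < 1/2) :
    J (1/2 - δ) ((1 - g)/2) = fg g δ / Real.log 2 := by
  have hlog2 : Real.log 2 ≠ 0 := (Real.log_pos (by norm_num)).ne'
  have hδg : 0 < δ * g := mul_pos hδ0 hg0
  have c1 : (0:ℝ) < 1+2*δ*g := by nlinarith
  have c2 : (0:ℝ) < 1-2*δ*g := by nlinarith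
  have c3 : (0:ℝ) < 1+4*δ*g+4*δ^2 := by nlinarith
  have c4 : (0:ℝ) < 1-4*δ*g+4*δ^2 := by nlinarith [sq_nonneg (1-2*δ)]
  have c5 : (0:ℝ) < 1-4*δ^2 := by nlinarith
  have hA : (0:ℝ) < (1+4*δ*g+4*δ^2)/4 := by linarith
  have hB : (0:ℝ) < (1-4*δ*g+4*δ^2)/4 := by linarith
  have hE : (0:ℝ) < (1-4*δ^2)/4 := by linarith
  have e1 : (1/2 - δ) * ((1-g)/2) + (1 - (1/2 - δ)) * (1 - (1-g)/2)
      = (1+4*δ*g+4*δ^2)/4 + (1-4*δ^2)/4 := by ring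
  have e2 : (1/2 - δ)^2 * ((1-g)/2) + (1 - (1/2 - δ))^2 * (1 - (1-g)/2)
      = (1+4*δ*g+4*δ^2)/4 := by ring
  have e3 : (1/2 - δ) * (1 - (1/2 - δ)) = (1-4*δ^2)/4 := by ring
  have e4 : (1/2 - δ) * (1 - (1-g)/2) + (1 - (1/2 - δ)) * ((1-g)/2)
      = (1-4*δ^2)/4 + (1-4*δ*g+4*δ^2)/4 := by ring
  have l1 : Real.log ((1+4*δ*g+4*δ^2)/4 + (1-4*δ^2)/4)
      = Real.log (1+2*δ*g) - Real.log 2 := by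
    rw [show (1+4*δ*g+4*δ^2)/4 + (1-4*δ^2)/4 = (1+2*δ*g)/2 from by ring,
      Real.log_div c1.ne' (by norm_num)]
  have l2 : Real.log ((1-4*δ^2)/4 + (1-4*δ*g+4*δ^2)/4)
      = Real.log (1-2*δ*g) - Real.log 2 := by
    rw [show (1-4*δ^2)/4 + (1-4*δ*g+4*δ^2)/4 = (1-2*δ*g)/2 from by ring,
      Real.log_div c2.ne' (by norm_num)]
  have l4 : Real.log (4:ℝ) = 2 * Real.log 2 := by
    rw [show (4:ℝ) = 2^2 from by norm_num, Real.log_pow]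
    push_cast; ring
  have l3 : Real.log ((1+4*δ*g+4*δ^2)/4)
      = Real.log (1+4*δ*g+4*δ^2) - 2*Real.log 2 := by
    rw [Real.log_div c3.ne' (by norm_num), l4]
  have l5 : Real.log ((1-4*δ*g+4*δ^2)/4)
      = Real.log (1-4*δ*g+4*δ^2) - 2*Real.log 2 := by
    rw [Real.log_div c4.ne' (by norm_num), l4]
  have l6 : Real.log ((1-4*δ^2)/4)
      = Real.log (1-4*δ^2) - 2*Real.log 2 := by
    rw [Real.log_div c5.ne' (by norm_num), l4]
  simp only [J]
  rw [e1, e2, e3, e4]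
  rw [Hb_mul hA hE, Hb_mul hE hB,
    Hb_split (x := (1+4*δ*g+4*δ^2)/4 + (1-4*δ^2)/4)
      (y := (1-4*δ^2)/4 + (1-4*δ*g+4*δ^2)/4) (by linarith) (by linarith) (by ring)]
  rw [l1, l2, l3, l5, l6]
  unfold fg
  field_simp
  ring

lemma gauss_cont : Continuous (fun t : ℝ => Real.exp (-t ^ 2)) := by fun_prop

lemma erf_zero : erf 0 = 0 := by simp [erf]

lemma erf_hasDerivAt (x : ℝ) :
    HasDerivAt erf (2 / Real.sqrt Real.pi * Real.exp (-x ^ 2)) x := by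
  have h : HasDerivAt (fun u : ℝ => ∫ t in (0:ℝ)..u, Real.exp (-t ^ 2))
      (Real.exp (-x ^ 2)) x :=
    intervalIntegral.integral_hasDerivAt_right
      (gauss_cont.intervalIntegrable 0 x)
      gauss_cont.stronglyMeasurable.stronglyMeasurableAtFilter
      gauss_cont.continuousAt
  exact h.const_mul (2 / Real.sqrt Real.pi)

lemma erf_pos {x : ℝ} (hx : 0 < x) : 0 < erf x := by
  have h1 : 0 < 2 / Real.sqrt Real.pi := by positivity
  have h2 : 0 < ∫ t in (0:ℝ)..x, Real.exp (-t ^ 2) :=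
    intervalIntegral.intervalIntegral_pos_of_pos
      (gauss_cont.intervalIntegrable 0 x) (fun t => Real.exp_pos _) hx
  exact mul_pos h1 h2

lemma erf_lt_one {x : ℝ} (hx : 0 < x) : erf x < 1 := by
  have hint : Integrable (fun t : ℝ => Real.exp (-t ^ 2)) := by
    have := integrable_exp_neg_mul_sq (by norm_num : (0:ℝ) < 1)
    simpa using this
  have hIoi : (∫ t in Set.Ioi (0:ℝ), Real.exp (-t ^ 2)) = Real.sqrt Real.pi / 2 := by
    have := integral_gaussian_Ioi 1
    simpa using this
  have hsplit : (∫ t in Set.Ioi (0:ℝ), Real.exp (-t ^ 2))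
      = (∫ t in Set.Ioc (0:ℝ) x, Real.exp (-t ^ 2))
        + ∫ t in Set.Ioi x, Real.exp (-t ^ 2) := by
    rw [← Set.Ioc_union_Ioi_eq_Ioi hx.le]
    exact setIntegral_union (Set.Ioc_disjoint_Ioi le_rfl) measurableSet_Ioi
      hint.integrableOn hint.integrableOn
  have htail : 0 < ∫ t in Set.Ioi x, Real.exp (-t ^ 2) := by
    rw [setIntegral_pos_iff_support_of_nonneg_ae
      (Filter.Eventually.of_forall (fun t => (Real.exp_pos _).le)) hint.integrableOn]
    have : (Function.support fun t : ℝ => Real.exp (-t ^ 2)) = Set.univ := by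
      ext t; simp [Function.support, (Real.exp_pos _).ne']
    rw [this, Set.univ_inter, Real.volume_Ioi]
    simp
  have hIoc : (∫ t in (0:ℝ)..x, Real.exp (-t ^ 2))
      = ∫ t in Set.Ioc (0:ℝ) x, Real.exp (-t ^ 2) :=
    intervalIntegral.integral_of_le hx.le
  have hpi : 0 < Real.sqrt Real.pi := Real.sqrt_pos.mpr Real.pi_pos
  have : (∫ t in (0:ℝ)..x, Real.exp (-t ^ 2)) < Real.sqrt Real.pi / 2 := by
    rw [hIoc]; linarith [hsplit.symm, hIoi]
  calc erf x = 2 / Real.sqrt Real.pi * ∫ t in (0:ℝ)..x, Real.exp (-t ^ 2) := rfl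
    _ < 2 / Real.sqrt Real.pi * (Real.sqrt Real.pi / 2) := by
        apply mul_lt_mul_of_pos_left this (by positivity)
    _ = 1 := by field_simp

noncomputable def uu (w Q : ℝ) : ℝ := w / Real.sqrt (2*Q)
noncomputable def dd (w Q : ℝ) : ℝ := erf (uu w Q) / 2

/-- For every `w > 0`,
`lim_{Q → ∞} Q² · J(ε(w,Q), γ(w)) = 2 w⁴ (1 - erf(w/√2)²)² / (π² ln 2)`. -/
theorem limit_Qsq_J (w : ℝ) (hw : 0 < w) :
    Tendsto (fun Q : ℝ => Q ^ 2 * J (eps w Q) (gam w)) atTop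
      (nhds (2 * w ^ 4 * (1 - erf (w / Real.sqrt 2) ^ 2) ^ 2 / (Real.pi ^ 2 * Real.log 2))) := by
  have hlog2 : Real.log 2 ≠ 0 := (Real.log_pos (by norm_num)).ne'
  have hpi0 : (0:ℝ) < Real.pi := Real.pi_pos
  set g : ℝ := erf (w / Real.sqrt 2) with hgdef
  have hg0 : 0 < g := erf_pos (div_pos hw (Real.sqrt_pos.mpr two_pos))
  have hg1 : g < 1 := erf_lt_one (div_pos hw (Real.sqrt_pos.mpr two_pos))
  have hsq : Tendsto (fun Q : ℝ => Real.sqrt (2*Q)) atTop atTop := by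
    rw [tendsto_atTop_atTop]
    intro b
    refine ⟨b^2, fun a ha => ?_⟩
    calc b ≤ |b| := le_abs_self b
      _ = Real.sqrt (b^2) := (Real.sqrt_sq_eq_abs b).symm
      _ ≤ Real.sqrt (2*a) := Real.sqrt_le_sqrt (by nlinarith [sq_nonneg b])
  have hu0 : Tendsto (uu w) atTop (nhds 0) := by
    have : Tendsto (fun Q : ℝ => w / Real.sqrt (2*Q)) atTop (nhds 0) :=
      tendsto_const_nhds.div_atTop hsq
    exact this
  have hupos : ∀ᶠ Q in atTop, 0 < uu w Q := by
    filter_upwards [eventually_gt_atTop (0:ℝ)] with Q hQ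
    exact div_pos hw (Real.sqrt_pos.mpr (by linarith))
  have huW : Tendsto (uu w) atTop (nhdsWithin 0 {(0:ℝ)}ᶜ) := by
    rw [tendsto_nhdsWithin_iff]
    exact ⟨hu0, hupos.mono fun Q h => Set.mem_compl_singleton_iff.mpr h.ne'⟩
  have hslope : Tendsto (fun y : ℝ => erf y / y) (nhdsWithin 0 {(0:ℝ)}ᶜ)
      (nhds (2 / Real.sqrt Real.pi)) := by
    have h0 := erf_hasDerivAt 0
    rw [show (-(0:ℝ)^2) = 0 from by norm_num, Real.exp_zero, mul_one] at h0
    have h := hasDerivAt_iff_tendsto_slope.mp h0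
    refine Tendsto.congr ?_ h
    intro y
    rw [slope_def_field, erf_zero, sub_zero, sub_zero]
  have herfu : Tendsto (fun Q => erf (uu w Q) / uu w Q) atTop
      (nhds (2 / Real.sqrt Real.pi)) := hslope.comp huW
  have h1 : Tendsto (fun Q => Q^2 * (dd w Q)^4) atTop (nhds (w^4/(4*Real.pi^2))) := by
    have heq : ∀ᶠ Q in atTop,
        (erf (uu w Q) / uu w Q)^4 * (w^4/64) = Q^2 * (dd w Q)^4 := by
      filter_upwards [eventually_gt_atTop (0:ℝ)] with Q hQ
      have h2Q : (0:ℝ) < 2*Q := by linarith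
      have huQ0 : uu w Q ≠ 0 := (div_pos hw (Real.sqrt_pos.mpr h2Q)).ne'
      have hu2 : (uu w Q)^2 = w^2/(2*Q) := by
        simp only [uu]
        rw [div_pow, Real.sq_sqrt h2Q.le]
      have hu4 : (uu w Q)^4 = w^4/(4*Q^2) := by
        rw [show (uu w Q)^4 = ((uu w Q)^2)^2 from by ring, hu2]
        field_simp
        ring
      simp only [dd]
      rw [div_pow, div_pow, hu4]
      field_simp
      ring
    refine Tendsto.congr' heq ?_
    have hlim : Tendsto (fun Q => (erf (uu w Q)/uu w Q)^4 * (w^4/64)) atTop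
        (nhds ((2/Real.sqrt Real.pi)^4 * (w^4/64))) := (herfu.pow 4).mul_const _
    have hval : (2/Real.sqrt Real.pi)^4 * (w^4/64) = w^4/(4*Real.pi^2) := by
      have h4 : (Real.sqrt Real.pi)^4 = Real.pi^2 := by
        rw [show (Real.sqrt Real.pi)^4 = ((Real.sqrt Real.pi)^2)^2 from by ring,
          Real.sq_sqrt hpi0.le]
      rw [div_pow, h4]
      field_simp
      ring
    rwa [hval] at hlim
  have hd0 : Tendsto (dd w) atTop (nhds 0) := by
    have hcont : ContinuousAt erf 0 := (erf_hasDerivAt 0).continuousAt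
    have h := (hcont.tendsto.comp hu0).div_const (2:ℝ)
    rw [erf_zero] at h
    show Tendsto (fun Q => erf (uu w Q) / 2) atTop (nhds 0)
    simpa using h
  have hdpos : ∀ᶠ Q in atTop, 0 < dd w Q := by
    filter_upwards [hupos] with Q hQ
    exact div_pos (erf_pos hQ) two_pos
  have hdW : Tendsto (dd w) atTop (nhdsWithin 0 {(0:ℝ)}ᶜ) := by
    rw [tendsto_nhdsWithin_iff]
    exact ⟨hd0, hdpos.mono fun Q h => Set.mem_compl_singleton_iff.mpr h.ne'⟩
  have h2 : Tendsto (fun Q => fg g (dd w Q) / (dd w Q)^4) atTop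
      (nhds (8*(1-g^2)^2)) := (tendsto_fg g).comp hdW
  have hd_half : ∀ᶠ Q in atTop, dd w Q < 1/2 := by
    filter_upwards [hupos] with Q hQ
    have := erf_lt_one hQ
    simp only [dd]
    linarith
  have hid : ∀ᶠ Q in atTop, (Q^2*(dd w Q)^4) * (fg g (dd w Q)/(dd w Q)^4) / Real.log 2
      = Q^2 * J (eps w Q) (gam w) := by
    filter_upwards [hdpos, hd_half] with Q hdp hdh
    have heps : eps w Q = 1/2 - dd w Q := by
      simp only [eps, dd, uu]
      ring
    have hgam : gam w = (1 - g)/2 := by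
      simp only [gam, hgdef]
      ring
    rw [heps, hgam, J_eq g (dd w Q) hg0 hg1 hdp hdh]
    have hd4 : (dd w Q)^4 ≠ 0 := by positivity
    field_simp
  have hmain := (h1.mul h2).div_const (Real.log 2)
  have hval2 : (w^4/(4*Real.pi^2)) * (8*(1-g^2)^2) / Real.log 2
      = 2*w^4*(1-g^2)^2/(Real.pi^2*Real.log 2) := by
    field_simp
    ring
  rw [hval2] at hmain
  exact hmain.congr' hid
end

section
/- For every nonempty bounded set W ⊆ (0,∞) there exist a constant C > 0 and a threshold Q₀ > 1 such that for all Q ≥ Q₀ and all w ∈ W, J(ε(w,Q), γ(w)) ≤ C/Q²; in particular, sup_{w ∈ W} J(ε(w,Q), γ(w)) = O(1/Q²) as Q → ∞. -/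
open Filter

lemma erf_nonneg {z : ℝ} (hz : 0 ≤ z) : 0 ≤ erf z := by
  apply mul_nonneg
  · positivity
  · apply intervalIntegral.integral_nonneg hz
    intro t _; positivity

lemma erf_le {z : ℝ} (hz : 0 ≤ z) : erf z ≤ 2 * z := by
  have h1 : (∫ t in (0:ℝ)..z, Real.exp (-t ^ 2)) ≤ ∫ t in (0:ℝ)..z, (1:ℝ) := by
    apply intervalIntegral.integral_mono_on hz
    · exact (Real.continuous_exp.comp (by continuity)).intervalIntegrable 0 z
    · exact intervalIntegrable_const
    · intro t _
      exact Real.exp_le_one_iff.2 (by nlinarith)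
  have h2 : (∫ t in (0:ℝ)..z, (1:ℝ)) = z := by simp
  have hI0 : 0 ≤ ∫ t in (0:ℝ)..z, Real.exp (-t ^ 2) := by
    apply intervalIntegral.integral_nonneg hz
    intro t _; positivity
  have hc : 2 / Real.sqrt Real.pi ≤ 2 := by
    rw [div_le_iff₀ (by positivity)]
    nlinarith [Real.sq_sqrt Real.pi_pos.le, Real.sqrt_nonneg Real.pi,
      Real.pi_gt_three]
  calc erf z ≤ 2 * ∫ t in (0:ℝ)..z, Real.exp (-t ^ 2) := by
        apply mul_le_mul_of_nonneg_right hc hI0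
    _ ≤ 2 * z := by rw [h2] at h1; linarith

lemma erf_pos_s10 {z : ℝ} (hz : 0 < z) : 0 < erf z := by
  apply mul_pos (by positivity)
  apply intervalIntegral.intervalIntegral_pos_of_pos
    ((Real.continuous_exp.comp (by continuity)).intervalIntegrable 0 z)
    (fun x => Real.exp_pos _) hz

lemma erf_lt_one_s10 {z : ℝ} (hz : 0 < z) : erf z < 1 := by
  have hint : MeasureTheory.Integrable (fun t : ℝ => Real.exp (-t ^ 2)) := by
    simpa using integrable_exp_neg_mul_sq (one_pos)
  have hsplit : (∫ t in Set.Ioc 0 z, Real.exp (-t ^ 2)) + ∫ t in Set.Ioi z, Real.exp (-t ^ 2)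
      = ∫ t in Set.Ioi (0:ℝ), Real.exp (-t ^ 2) := by
    rw [← MeasureTheory.setIntegral_union]
    · rw [Set.Ioc_union_Ioi_eq_Ioi hz.le]
    · exact Set.Ioc_disjoint_Ioi le_rfl
    · exact measurableSet_Ioi
    · exact hint.integrableOn
    · exact hint.integrableOn
  have htail : 0 < ∫ t in Set.Ioi z, Real.exp (-t ^ 2) := by
    rw [MeasureTheory.setIntegral_pos_iff_support_of_nonneg_ae]
    · have : (Function.support fun t : ℝ => Real.exp (-t ^ 2)) = Set.univ := by
        ext t; simp [Function.support, Real.exp_ne_zero]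
      rw [this]
      simp
    · filter_upwards with t using (Real.exp_pos _).le
    · exact hint.integrableOn
  have hIoi : (∫ t in Set.Ioi (0:ℝ), Real.exp (-t ^ 2)) = Real.sqrt Real.pi / 2 := by
    have := integral_gaussian_Ioi 1
    simpa using this
  have hIoc : (∫ t in (0:ℝ)..z, Real.exp (-t ^ 2)) = ∫ t in Set.Ioc 0 z, Real.exp (-t ^ 2) :=
    intervalIntegral.integral_of_le hz.le
  have hlt : (∫ t in (0:ℝ)..z, Real.exp (-t ^ 2)) < Real.sqrt Real.pi / 2 := by
    rw [hIoc]; linarith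
  have hs : 0 < Real.sqrt Real.pi := Real.sqrt_pos.2 Real.pi_pos
  calc erf z < 2 / Real.sqrt Real.pi * (Real.sqrt Real.pi / 2) := by
        apply mul_lt_mul_of_pos_left hlt (by positivity)
    _ = 1 := by field_simp

lemma hHb (p : ℝ) : Hb p * Real.log 2 = -(p * Real.log p) - (1 - p) * Real.log (1 - p) := by
  have h2 : Real.log 2 ≠ 0 := by
    have := Real.log_two_gt_d9; positivity
  simp only [Hb, Real.logb]
  field_simp

lemma jensen {a b c : ℝ} (ha0 : 0 < a) (ha1 : a < 1) (hb0 : 0 < b) (hb1 : b < 1)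
    (hc0 : 0 < c) (hc1 : c < 1) (h : a * b + (1 - a) * c = a) :
    Hb a - a * Hb b - (1 - a) * Hb c ≤ 2 * (b - c) ^ 2 := by
  have l2 : (0.6931471803 : ℝ) < Real.log 2 := Real.log_two_gt_d9
  have hane : a ≠ 0 := ha0.ne'
  have ha1ne : (1 : ℝ) - a ≠ 0 := by linarith
  have key : ∀ p : ℝ, 0 < p → p < 1 →
      p * (Real.log p - Real.log a) + (1 - p) * (Real.log (1-p) - Real.log (1-a))
        ≤ (p - a)^2 / (a * (1-a)) := by
    intro p hp0 hp1
    have h1 : Real.log p - Real.log a = Real.log (p / a) := (Real.log_div hp0.ne' ha0.ne').symm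
    have h2 : Real.log (1-p) - Real.log (1-a) = Real.log ((1-p) / (1-a)) :=
      (Real.log_div (by linarith) (by linarith)).symm
    have h3 : Real.log (p / a) ≤ p / a - 1 := Real.log_le_sub_one_of_pos (by positivity)
    have h4 : Real.log ((1-p) / (1-a)) ≤ (1-p) / (1-a) - 1 :=
      Real.log_le_sub_one_of_pos (by apply div_pos <;> linarith)
    calc p * (Real.log p - Real.log a) + (1 - p) * (Real.log (1-p) - Real.log (1-a))
        = p * Real.log (p / a) + (1 - p) * Real.log ((1-p) / (1-a)) := by rw [h1, h2]
      _ ≤ p * (p / a - 1) + (1 - p) * ((1-p) / (1-a) - 1) :=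
          add_le_add (mul_le_mul_of_nonneg_left h3 hp0.le)
            (mul_le_mul_of_nonneg_left h4 (by linarith))
      _ = (p - a)^2 / (a * (1-a)) := by
          rw [eq_div_iff (mul_ne_zero hane ha1ne)]
          field_simp
          ring
  have identity : (Hb a - a * Hb b - (1 - a) * Hb c) * Real.log 2
      = a * (b * (Real.log b - Real.log a) + (1 - b) * (Real.log (1-b) - Real.log (1-a)))
        + (1 - a) * (c * (Real.log c - Real.log a) + (1 - c) * (Real.log (1-c) - Real.log (1-a))) := by
    have e1 := hHb a
    have e2 := hHb b
    have e3 := hHb c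
    linear_combination e1 - a * e2 - (1-a) * e3 + (Real.log a - Real.log (1-a)) * h
  have hba : b - a = (1 - a) * (b - c) := by linear_combination h
  have hca : c - a = -(a * (b - c)) := by linear_combination h
  have hsum : (Hb a - a * Hb b - (1 - a) * Hb c) * Real.log 2 ≤ (b - c)^2 := by
    rw [identity]
    have k1 := key b hb0 hb1
    have k2 := key c hc0 hc1
    calc a * (b * (Real.log b - Real.log a) + (1 - b) * (Real.log (1-b) - Real.log (1-a)))
          + (1 - a) * (c * (Real.log c - Real.log a) + (1 - c) * (Real.log (1-c) - Real.log (1-a)))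
        ≤ a * ((b - a)^2 / (a * (1-a))) + (1 - a) * ((c - a)^2 / (a * (1-a))) :=
          add_le_add (mul_le_mul_of_nonneg_left k1 ha0.le)
            (mul_le_mul_of_nonneg_left k2 (by linarith))
      _ = (b - c)^2 := by
          rw [hba, hca]
          field_simp
          ring
  have hS : 0 ≤ (b - c)^2 := sq_nonneg _
  by_cases hX : Hb a - a * Hb b - (1 - a) * Hb c ≤ 0
  · linarith
  · push_neg at hX
    have := mul_le_mul_of_nonneg_left l2.le hX.le
    nlinarith

set_option maxHeartbeats 1000000 in
lemma key_bound {δ g : ℝ} (hδ0 : 0 ≤ δ) (hδ : δ ≤ 1/8) (hg0 : 0 < g) (hg1 : g < 1) :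
    J (1/2 - δ) ((1 - g)/2) ≤ 128 * δ^4 := by
  obtain ⟨a, hadef⟩ : ∃ a : ℝ, a = 1/2 + δ * g := ⟨_, rfl⟩
  have hdg0 : 0 ≤ δ * g := mul_nonneg hδ0 hg0.le
  have hdg : δ * g ≤ 1/8 := by nlinarith
  have ha0 : 0 < a := by rw [hadef]; linarith
  have ha1 : a < 1 := by rw [hadef]; linarith
  have ha1' : (0:ℝ) < 1 - a := by linarith
  obtain ⟨b, hbdef⟩ : ∃ b : ℝ, b = (1/4 + δ^2 + δ*g) / a := ⟨_, rfl⟩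
  obtain ⟨c, hcdef⟩ : ∃ c : ℝ, c = (1/4 - δ^2) / (1 - a) := ⟨_, rfl⟩
  have hnum1 : (0:ℝ) < 1/4 + δ^2 + δ*g := by nlinarith
  have hnum2 : (0:ℝ) < 1/4 - δ^2 := by nlinarith
  have hnum3 : (0:ℝ) < (1 - a) - (1/4 - δ^2) := by rw [hadef]; nlinarith
  have hnum4 : (0:ℝ) < a - (1/4 + δ^2 + δ*g) := by rw [hadef]; nlinarith
  have hb0 : 0 < b := by rw [hbdef]; exact div_pos hnum1 ha0
  have hb1 : b < 1 := by
    rw [hbdef, div_lt_one ha0]; linarith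
  have hc0 : 0 < c := by rw [hcdef]; exact div_pos hnum2 ha1'
  have hc1 : c < 1 := by
    rw [hcdef, div_lt_one ha1']; linarith
  have e5 : a * b = 1/4 + δ^2 + δ*g := by
    rw [hbdef]; field_simp
  have e6 : (1 - a) * c = 1/4 - δ^2 := by
    rw [hcdef]; rw [mul_div_cancel₀ _ ha1'.ne']
  have hmix : a * b + (1 - a) * c = a := by
    rw [e5, e6, hadef]; ring
  have hJ : J (1/2 - δ) ((1 - g)/2) = Hb a - a * Hb b - (1 - a) * Hb c := by
    rw [J]
    have e1 : (1/2 - δ) * ((1 - g)/2) + (1 - (1/2 - δ)) * (1 - (1 - g)/2) = a := by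
      rw [hadef]; ring
    have e2 : ((1/2 - δ)^2 * ((1 - g)/2) + (1 - (1/2 - δ))^2 * (1 - (1 - g)/2)) /
        ((1/2 - δ) * ((1 - g)/2) + (1 - (1/2 - δ)) * (1 - (1 - g)/2)) = b := by
      rw [hbdef, ← e1]
      congr 1 <;> ring
    have e3 : (1/2 - δ) * (1 - (1 - g)/2) + (1 - (1/2 - δ)) * ((1 - g)/2) = 1 - a := by
      rw [hadef]; ring
    have e4 : (1/2 - δ) * (1 - (1/2 - δ)) / ((1/2 - δ) * (1 - (1 - g)/2) + (1 - (1/2 - δ)) * ((1 - g)/2)) = c := by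
      rw [hcdef, ← e3]
      congr 1 <;> ring
    rw [e2, e4, e1, e3]
  rw [hJ]
  have hjen := jensen ha0 ha1 hb0 hb1 hc0 hc1 hmix
  have hbc : b - c = δ^2 * (1 - g^2) / (a * (1 - a)) := by
    rw [hbdef, hcdef, div_sub_div _ _ ha0.ne' ha1'.ne']
    congr 1
    rw [hadef]; ring
  have haa : (3:ℝ)/16 ≤ a * (1 - a) := by rw [hadef]; nlinarith
  have hbc2 : (b - c)^2 ≤ 64 * δ^4 := by
    rw [hbc, div_pow]
    rw [div_le_iff₀ (by positivity)]
    have hgg : (0:ℝ) < 1 - g^2 := by nlinarith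
    have hgg1 : (1 - g^2)^2 ≤ 1 := by nlinarith
    have hd4 : (0:ℝ) ≤ δ^4 := by positivity
    have h1 : (δ^2 * (1 - g^2))^2 ≤ δ^4 := by nlinarith
    have h4 : (3/16:ℝ)^2 ≤ (a * (1-a))^2 := by nlinarith
    nlinarith [mul_le_mul_of_nonneg_left h4 hd4]
  linarith

set_option maxHeartbeats 1000000 in
/-- For every nonempty bounded `W ⊆ (0,∞)` there are `C > 0` and `Q₀ > 1` such that
`J(ε(w,Q), γ(w)) ≤ C/Q²` for all `Q ≥ Q₀` and all `w ∈ W`. -/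
theorem quantized_SK_capacity_upper_bound (W : Set ℝ) (hne : W.Nonempty)
    (hbd : Bornology.IsBounded W) (hpos : W ⊆ Set.Ioi 0) :
    ∃ C > (0 : ℝ), ∃ Q₀ > (1 : ℝ), ∀ Q ≥ Q₀, ∀ w ∈ W,
      J (eps w Q) (gam w) ≤ C / Q ^ 2 := by
  obtain ⟨r, hr⟩ := hbd.subset_closedBall 0
  set B : ℝ := max r 1 with hBdef
  have hB1 : (1:ℝ) ≤ B := le_max_right r 1
  have hB0 : (0:ℝ) < B := by linarith
  have hwB : ∀ w ∈ W, w ≤ B := by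
    intro w hw
    have := hr hw
    rw [Metric.mem_closedBall, Real.dist_eq, sub_zero] at this
    calc w ≤ |w| := le_abs_self w
      _ ≤ r := this
      _ ≤ B := le_max_left r 1
  refine ⟨32 * B^4, by positivity, max 2 (32 * B^2), ?_, ?_⟩
  · have : (1:ℝ) < 2 := one_lt_two
    exact lt_of_lt_of_le this (le_max_left _ _)
  intro Q hQ w hw
  have hw0 : 0 < w := hpos hw
  have hwB' : w ≤ B := hwB w hw
  have hQ2 : (2:ℝ) ≤ Q := le_trans (le_max_left _ _) hQ
  have hQB : 32 * B^2 ≤ Q := le_trans (le_max_right _ _) hQ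
  have hQ0 : (0:ℝ) < Q := by linarith
  have h2Q : (0:ℝ) < 2 * Q := by linarith
  set s : ℝ := Real.sqrt (2 * Q) with hsdef
  have hs0 : 0 < s := Real.sqrt_pos.2 h2Q
  have hs2 : s^2 = 2 * Q := Real.sq_sqrt h2Q.le
  set z : ℝ := w / s with hzdef
  have hz0 : 0 < z := div_pos hw0 hs0
  -- s ≥ 8 B, so z ≤ 1/8
  have hs8B : 8 * B ≤ s := by
    have h64 : (8 * B)^2 ≤ 2 * Q := by nlinarith
    have := Real.sqrt_le_sqrt h64
    rwa [Real.sqrt_sq (by positivity : (0:ℝ) ≤ 8 * B)] at this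
  have hz18 : z ≤ 1/8 := by
    rw [hzdef, div_le_iff₀ hs0]
    nlinarith
  set δ : ℝ := erf z / 2 with hddef
  have hδ0 : 0 ≤ δ := by
    have := erf_nonneg hz0.le
    rw [hddef]; linarith
  have hδz : δ ≤ z := by
    have := erf_le hz0.le
    rw [hddef]; linarith
  have hδ18 : δ ≤ 1/8 := le_trans hδz hz18
  set g : ℝ := erf (w / Real.sqrt 2) with hgdef
  have hwsq2 : 0 < w / Real.sqrt 2 := by positivity
  have hg0 : 0 < g := erf_pos_s10 hwsq2
  have hg1 : g < 1 := erf_lt_one_s10 hwsq2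
  have heps : eps w Q = 1/2 - δ := by
    rw [eps, hddef, hzdef, hsdef]; ring
  have hgam : gam w = (1 - g)/2 := by
    rw [gam, hgdef]; ring
  rw [heps, hgam]
  have hkey := key_bound hδ0 hδ18 hg0 hg1
  have hz4 : z^4 = w^4 / (4 * Q^2) := by
    rw [hzdef, div_pow]
    congr 1
    nlinarith [hs2]
  have hδ4 : δ^4 ≤ z^4 := pow_le_pow_left₀ hδ0 hδz 4
  calc J (1/2 - δ) ((1 - g)/2) ≤ 128 * δ^4 := hkey
    _ ≤ 128 * z^4 := by linarith
    _ = 32 * w^4 / Q^2 := by rw [hz4]; ring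
    _ ≤ 32 * B^4 / Q^2 := by gcongr <;> first | exact hw0.le | exact hwB'
end
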